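/- arXiv:1703.08373 — 5 statements merged into one kernel-verified Lean document; each statement's English description precedes it below -/
import Mathlib

section
/- The fixed point of the fluid-limit dynamical system is unique in E: if (q, δ) ∈ E satisfies that all the fluid-limit drift terms are zero, then δ₀ = 1−λ, δ₁ = 0, q₁ = λ, and qᵢ = 0 for i = 2,…,B. -/
open Finset

/-- The coefficient `p₀(q, δ, λ)` of the fluid-limit dynamics:
`p₀ = 1` if `u = 1 - q₁ - δ₀ - δ₁ > 0`, and `min{λ⁻¹(δ₁ν + q₁ - q₂), 1}` otherwise. -/
noncomputable def fluidP0 (lam nu : ℝ) (q : ℕ → ℝ) (d0 d1 : ℝ) : ℝ :=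
  if 1 - q 1 - d0 - d1 > 0 then 1 else min (lam⁻¹ * (d1 * nu + q 1 - q 2)) 1

/-- The coefficients `pᵢ(q, δ, λ)`: `p₀` as above, and
`pᵢ = (1 - p₀)(qᵢ - q_{i+1})/q₁` for `i ≥ 1`. -/
noncomputable def fluidP (lam nu : ℝ) (q : ℕ → ℝ) (d0 d1 : ℝ) : ℕ → ℝ
  | 0 => fluidP0 lam nu q d0 d1
  | (i + 1) => (1 - fluidP0 lam nu q d0 d1) * (q (i + 1) - q (i + 2)) / q 1

/-- Drift (right-hand side of the ODE) for `qᵢ`, `i = 1, …, B`: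
`λ p_{i-1}(q, δ, λ) - (qᵢ - q_{i+1})`. -/
noncomputable def driftQ (lam nu : ℝ) (q : ℕ → ℝ) (d0 d1 : ℝ) (i : ℕ) : ℝ :=
  lam * fluidP lam nu q d0 d1 (i - 1) - (q i - q (i + 1))

/-- Drift for `δ₀`: `μu - λ(1 - p₀)1{δ₀ > 0}`, with `u = 1 - q₁ - δ₀ - δ₁`. -/
noncomputable def driftD0 (lam mu nu : ℝ) (q : ℕ → ℝ) (d0 d1 : ℝ) : ℝ :=
  mu * (1 - q 1 - d0 - d1) -
    lam * (1 - fluidP0 lam nu q d0 d1) * (if d0 > 0 then 1 else 0)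

/-- Drift for `δ₁`: `λ(1 - p₀)1{δ₀ > 0} - νδ₁`. -/
noncomputable def driftD1 (lam nu : ℝ) (q : ℕ → ℝ) (d0 d1 : ℝ) : ℝ :=
  lam * (1 - fluidP0 lam nu q d0 d1) * (if d0 > 0 then 1 else 0) - nu * d1

/-! At a fixed point the free mass `u = 1 - q₁ - δ₀ - δ₁` vanishes (otherwise `δ₀` grows at rate
`μu`), so the flow `λ(1 - p₀)1{δ₀ > 0}` into `δ₁` equals `μu = 0` and `δ₁ = 0`. The balance
equations for `q₂, …, q_B` say that the differences `qᵢ - q_{i+1}` form a geometric sequence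
of ratio `c = λ(1 - p₀)/q₁ ≥ 0`, which ends at `q_{B+1} = 0`; hence `q_{i+1} ≤ c qᵢ`.
If `δ₀ = 0`, then `q₁ = 1` and the balance at level 1 reads `λp₀ = 1 - q₂ ≥ 1 - λ(1 - p₀)`,
forcing `λ ≥ 1`. So `δ₀ > 0`, the vanishing flow gives `p₀ = 1`, hence `c = 0`: the levels
above 1 are empty, and the balance at level 1 gives `q₁ = λ`. -/

theorem succ_le_mul_of_sub_succ_eq_mul_sub {q : ℕ → ℝ} {c : ℝ} {B : ℕ} (hc : 0 ≤ c)
    (hqB_nonneg : 0 ≤ q B) (hqB : q (B + 1) = 0)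
    (hrec : ∀ i, 1 ≤ i → i < B → q (i + 1) - q (i + 2) = c * (q i - q (i + 1))) :
    ∀ j, 1 ≤ j → j ≤ B → q (j + 1) ≤ c * q j := by
  intro j hj hjB
  induction hjB using Nat.decreasingInduction with
  | self => rw [hqB]; exact mul_nonneg hc hqB_nonneg
  | of_succ k hkB ih =>
    nlinarith [hrec k hj hkB, ih (by omega)]

theorem fluidP0_le_one (lam nu : ℝ) (q : ℕ → ℝ) (d0 d1 : ℝ) : fluidP0 lam nu q d0 d1 ≤ 1 := by
  unfold fluidP0
  split_ifs
  exacts [le_rfl, min_le_right _ _]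

theorem driftQ_one (lam nu : ℝ) (q : ℕ → ℝ) (d0 d1 : ℝ) :
    driftQ lam nu q d0 d1 1 = lam * fluidP0 lam nu q d0 d1 - (q 1 - q 2) :=
  rfl

theorem sub_succ_eq_mul_sub_of_driftQ_eq_zero {lam nu : ℝ} {q : ℕ → ℝ} {d0 d1 : ℝ} {i : ℕ}
    (hi : 1 ≤ i) (h : driftQ lam nu q d0 d1 (i + 1) = 0) :
    q (i + 1) - q (i + 2) = lam * (1 - fluidP0 lam nu q d0 d1) / q 1 * (q i - q (i + 1)) := by
  obtain ⟨m, rfl⟩ := Nat.exists_eq_add_of_le' hi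
  simp only [driftQ, fluidP, Nat.add_sub_cancel] at h
  linear_combination -h

theorem slack_eq_zero_of_driftD0_eq_zero {lam mu nu : ℝ} {q : ℕ → ℝ} {d0 d1 : ℝ}
    (hmu : 0 < mu) (hsum : d0 + d1 + q 1 ≤ 1) (h : driftD0 lam mu nu q d0 d1 = 0) :
    1 - q 1 - d0 - d1 = 0 := by
  refine le_antisymm (not_lt.1 fun hpos => ?_) (by linarith)
  rw [driftD0, fluidP0, if_pos hpos, sub_self, mul_zero, zero_mul, sub_zero] at h
  exact (mul_pos hmu hpos).ne' h

theorem one_le_lam_of_q_one_eq_one {B : ℕ} {lam nu : ℝ} {q : ℕ → ℝ} {d0 d1 : ℝ} (hB : 1 ≤ B)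
    (hlam : 0 ≤ lam) (hq : ∀ i, 1 ≤ i → i ≤ B → 0 ≤ q i) (hqB : q (B + 1) = 0)
    (hfixQ : ∀ i, 1 ≤ i → i ≤ B → driftQ lam nu q d0 d1 i = 0) (hq1 : q 1 = 1) :
    1 ≤ lam := by
  have hc : 0 ≤ lam * (1 - fluidP0 lam nu q d0 d1) / q 1 :=
    div_nonneg (mul_nonneg hlam (sub_nonneg.2 (fluidP0_le_one ..))) (hq 1 le_rfl hB)
  have hq2 := succ_le_mul_of_sub_succ_eq_mul_sub hc (hq B hB le_rfl) hqB
    (fun i hi hiB => sub_succ_eq_mul_sub_of_driftQ_eq_zero hi (hfixQ (i + 1) (by omega) hiB))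
    1 le_rfl hB
  rw [hq1, div_one, mul_one] at hq2
  have hQ1 := driftQ_one .. ▸ hfixQ 1 le_rfl hB
  linarith

theorem q_eq_zero_of_fluidP0_eq_one {B : ℕ} {lam nu : ℝ} {q : ℕ → ℝ} {d0 d1 : ℝ} (hB : 1 ≤ B)
    (hq : ∀ i, 1 ≤ i → i ≤ B → 0 ≤ q i) (hqB : q (B + 1) = 0)
    (hfixQ : ∀ i, 1 ≤ i → i ≤ B → driftQ lam nu q d0 d1 i = 0)
    (hp0 : fluidP0 lam nu q d0 d1 = 1) :
    ∀ i, 2 ≤ i → i ≤ B + 1 → q i = 0 := by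
  have hdecay := succ_le_mul_of_sub_succ_eq_mul_sub le_rfl (hq B hB le_rfl) hqB fun i hi hiB => by
    rw [sub_succ_eq_mul_sub_of_driftQ_eq_zero hi (hfixQ (i + 1) (by omega) hiB), hp0]
    ring
  intro i hi hiB
  rcases hiB.lt_or_eq with hiB | rfl
  · have hle := hdecay (i - 1) (by omega) (by omega)
    rw [zero_mul, Nat.sub_add_cancel (by omega)] at hle
    exact le_antisymm hle (hq i (by omega) (by omega))
  · exact hqB

theorem fixed_point_unique_general (B : ℕ) (hB : 1 ≤ B) (lam mu nu : ℝ)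
    (hlam0 : 0 < lam) (hlam1 : lam < 1) (hmu : 0 < mu) (hnu : 0 < nu)
    (q : ℕ → ℝ) (d0 d1 : ℝ)
    -- membership in E
    (hq01 : ∀ i, 1 ≤ i → i ≤ B → q i ∈ Set.Icc (0:ℝ) 1)
    (hqB : q (B + 1) = 0)
    (hd0mem : d0 ∈ Set.Icc (0:ℝ) 1)
    (hsum : d0 + d1 + q 1 ≤ 1)
    -- all drifts vanish
    (hfixQ : ∀ i, 1 ≤ i → i ≤ B → driftQ lam nu q d0 d1 i = 0)
    (hfixD0 : driftD0 lam mu nu q d0 d1 = 0)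
    (hfixD1 : driftD1 lam nu q d0 d1 = 0) :
    d0 = 1 - lam ∧ d1 = 0 ∧ q 1 = lam ∧ ∀ i, 2 ≤ i → i ≤ B → q i = 0 := by
  set p0 := fluidP0 lam nu q d0 d1
  have hq i (h1 : 1 ≤ i) (h2 : i ≤ B) : 0 ≤ q i := (hq01 i h1 h2).1
  have hu := slack_eq_zero_of_driftD0_eq_zero hmu hsum hfixD0
  have hflow : lam * (1 - p0) * (if d0 > 0 then 1 else 0) = 0 := by
    rw [driftD0, hu, mul_zero, zero_sub, neg_eq_zero] at hfixD0
    exact hfixD0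
  have hd1 : d1 = 0 := by
    rw [driftD1, hflow, zero_sub, neg_eq_zero] at hfixD1
    exact (mul_eq_zero.1 hfixD1).resolve_left hnu.ne'
  have hp0 : p0 = 1 := by
    rcases mul_eq_zero.1 hflow with h | h
    · linarith [(mul_eq_zero.1 h).resolve_left hlam0.ne']
    · have hd0 : d0 ≤ 0 := not_lt.1 fun hpos => by simp [hpos] at h
      linarith [one_le_lam_of_q_one_eq_one hB hlam0.le hq hqB hfixQ (by linarith [hd0mem.1])]
  have htail := q_eq_zero_of_fluidP0_eq_one hB hq hqB hfixQ hp0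
  have hQ1 : lam * p0 - (q 1 - q 2) = 0 := driftQ_one .. ▸ hfixQ 1 le_rfl hB
  rw [hp0, mul_one, htail 2 le_rfl (by omega)] at hQ1
  refine ⟨?_, hd1, ?_, fun i hi hiB => htail i hi (by omega)⟩ <;> linarith

/-- Uniqueness of the fixed point of the fluid-limit dynamics in `E`: if a state
`(q, δ₀, δ₁) ∈ E` makes all the drift terms vanish, then necessarily
`δ₀ = 1 - λ`, `δ₁ = 0`, `q₁ = λ`, and `qᵢ = 0` for `i = 2, …, B`. -/
theorem fixed_point_unique (B : ℕ) (hB : 1 ≤ B) (lam mu nu : ℝ)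
    (hlam0 : 0 < lam) (hlam1 : lam < 1) (hmu : 0 < mu) (hnu : 0 < nu)
    (q : ℕ → ℝ) (d0 d1 : ℝ)
    -- membership in E
    (hq01 : ∀ i, 1 ≤ i → i ≤ B → q i ∈ Set.Icc (0:ℝ) 1)
    (hmono : ∀ i, 1 ≤ i → i ≤ B → q (i + 1) ≤ q i)
    (hqB : q (B + 1) = 0)
    (hd0mem : d0 ∈ Set.Icc (0:ℝ) 1) (hd1mem : d1 ∈ Set.Icc (0:ℝ) 1)
    (hsum : d0 + d1 + q 1 ≤ 1)
    -- all drifts vanish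
    (hfixQ : ∀ i, 1 ≤ i → i ≤ B → driftQ lam nu q d0 d1 i = 0)
    (hfixD0 : driftD0 lam mu nu q d0 d1 = 0)
    (hfixD1 : driftD1 lam nu q d0 d1 = 0) :
    d0 = 1 - lam ∧ d1 = 0 ∧ q 1 = lam ∧ ∀ i, 2 ≤ i → i ≤ B → q i = 0 :=
  fixed_point_unique_general B hB lam mu nu hlam0 hlam1 hmu hnu q d0 d1 hq01 hqB hd0mem hsum hfixQ
    hfixD0 hfixD1
end

section
/- If λ + μ < 1, λ > 0, μ > 0, μ ≠ 1, then the function y(t) = e^{−(1+μ)t}(e^{t}(λ + μ − 1) − λe^{μt})/(μ − 1) satisfies y(t) > 0 for all t ≥ 0. -/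
open Real

theorem jiq_y_positive_general (lam mu : ℝ) (hlam : 0 < lam)
    (hsum : lam + mu < 1)
    (y : ℝ → ℝ)
    (hy : ∀ t, y t =
      exp (-(1 + mu) * t) * (exp t * (lam + mu - 1) - lam * exp (mu * t)) / (mu - 1)) :
    ∀ t, 0 ≤ t → 0 < y t := by
  intro t _
  have hden : mu - 1 < 0 := by linarith
  have hnum : exp t * (lam + mu - 1) - lam * exp (mu * t) < 0 := by
    nlinarith [exp_pos t, exp_pos (mu * t)]
  rw [hy t]
  exact div_pos_of_neg_of_neg (mul_neg_of_pos_of_neg (exp_pos _) hnum) hden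

/-- If `λ + μ < 1`, `λ > 0`, `μ > 0`, `μ ≠ 1`, then
`y(t) = e^{-(1+μ)t}(e^{t}(λ + μ - 1) - λe^{μt})/(μ - 1)` is positive for all `t ≥ 0`. -/
theorem jiq_y_positive (lam mu : ℝ) (hlam : 0 < lam) (hmu : 0 < mu)
    (hsum : lam + mu < 1) (hmu1 : mu ≠ 1)
    (y : ℝ → ℝ)
    (hy : ∀ t, y t =
      exp (-(1 + mu) * t) * (exp t * (lam + mu - 1) - lam * exp (mu * t)) / (mu - 1)) :
    ∀ t, 0 ≤ t → 0 < y t :=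
  jiq_y_positive_general lam mu hlam hsum y hy
end

section
/- If δ₁ : [0,∞) → [0,∞) satisfies δ₁(t) = δ₁(0) + ∫₀ᵗ λ(1 − p₀(s)) ds − ν∫₀ᵗ δ₁(s) ds with p₀(t) → 1 as t → ∞ and 0 ≤ p₀ ≤ 1, then δ₁(t) → 0 as t → ∞. -/
/-!
Write `f = λ (1 - p₀)`, so that `δ₁' = f - ν δ₁` in integrated form, and `f → 0`. Given `η > 0`,
once `f ≤ ν η / 2` the solution decreases at rate at least `ν η / 2` on every interval where it
stays above `η`. Hence it drops below `η` after finite time, and by continuity it can never rise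
above `η` again: on the interval since the last time it was below `η` it would be decreasing.
-/

open Filter intervalIntegral Set MeasureTheory

theorem le_max_of_decrease_above {u : ℝ → ℝ} (hu : Continuous u) {c κ T t : ℝ} (hκ : 0 ≤ κ)
    (hdec : ∀ a b, T ≤ a → a ≤ b → (∀ r ∈ Icc a b, c ≤ u r) → u b ≤ u a - κ * (b - a))
    (hTt : T ≤ t) : u t ≤ max c (u T - κ * (t - T)) := by
  by_cases hdip : ∃ s ∈ Icc T t, u s ≤ c
  · -- `s` is the last time in `[T, t]` at which `u ≤ c`.
    obtain ⟨s, ⟨hs, hsc⟩, hlast⟩ :=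
      (isCompact_Icc.inter_right (isClosed_le hu continuous_const)).exists_isGreatest hdip
    rcases hs.2.eq_or_lt with rfl | hst
    · exact le_max_of_le_left hsc
    have habove : Ioc s t ⊆ {r | c ≤ u r} := fun r hr => show c ≤ u r from
      (not_le.1 fun hrc => hr.1.not_ge (hlast ⟨⟨hs.1.trans hr.1.le, hr.2⟩, hrc⟩)).le
    have hIcc : Icc s t ⊆ {r | c ≤ u r} := by
      rw [← closure_Ioc hst.ne]
      exact (isClosed_le continuous_const hu).closure_subset_iff.2 habove
    have hdrop := hdec s t hs.1 hs.2 hIcc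
    exact le_max_of_le_left
      (by nlinarith [show u s ≤ c from hsc, mul_nonneg hκ (sub_nonneg.2 hs.2)])
  · push Not at hdip
    exact le_max_of_le_right (hdec T t le_rfl hTt fun r hr => (hdip r hr).le)

theorem le_sub_mul_of_eq_integral {u f : ℝ → ℝ} {ν c ε s t : ℝ} (hu : Continuous u)
    (hν : 0 ≤ ν) (hf : IntervalIntegrable f volume 0 t) (hs : 0 ≤ s) (hst : s ≤ t)
    (hfε : ∀ r ∈ Icc s t, f r ≤ ε) (hcu : ∀ r ∈ Icc s t, c ≤ u r)
    (heq : ∀ t, 0 ≤ t → u t = u 0 + (∫ r in (0:ℝ)..t, f r) - ν * ∫ r in (0:ℝ)..t, u r) :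
    u t ≤ u s - (ν * c - ε) * (t - s) := by
  have hf0s : IntervalIntegrable f volume 0 s :=
    hf.mono_set (uIcc_subset_uIcc_left (by rw [uIcc_of_le (hs.trans hst)]; exact ⟨hs, hst⟩))
  have hincr : u t - u s = (∫ r in s..t, f r) - ν * ∫ r in s..t, u r := by
    rw [heq t (hs.trans hst), heq s hs, ← integral_interval_sub_left hf hf0s,
      ← integral_interval_sub_left (hu.intervalIntegrable 0 t) (hu.intervalIntegrable 0 s)]
    ring
  have hfle : ∫ r in s..t, f r ≤ ε * (t - s) := by
    simpa [mul_comm] using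
      integral_mono_on hst (hf0s.symm.trans hf) (intervalIntegrable_const (μ := volume)) hfε
  have hule : c * (t - s) ≤ ∫ r in s..t, u r := by
    simpa [mul_comm] using
      integral_mono_on hst (intervalIntegrable_const (μ := volume)) (hu.intervalIntegrable s t) hcu
  nlinarith [mul_le_mul_of_nonneg_left hule hν]

theorem eventually_le_of_eq_integral {u f : ℝ → ℝ} {ν : ℝ} (hu : Continuous u) (hν : 0 < ν)
    (hf : ∀ t, 0 ≤ t → IntervalIntegrable f volume 0 t)
    (hf_limsup : ∀ ε > 0, ∀ᶠ r in atTop, f r ≤ ε)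
    (heq : ∀ t, 0 ≤ t → u t = u 0 + (∫ r in (0:ℝ)..t, f r) - ν * ∫ r in (0:ℝ)..t, u r)
    {η : ℝ} (hη : 0 < η) : ∀ᶠ t in atTop, u t ≤ η := by
  set κ := ν * η / 2 with hκ_def
  have hκ : 0 < κ := by positivity
  obtain ⟨T, hT⟩ := eventually_atTop.1 ((hf_limsup κ hκ).and (eventually_ge_atTop 0))
  have hdec : ∀ a b, T ≤ a → a ≤ b → (∀ r ∈ Icc a b, η ≤ u r) → u b ≤ u a - κ * (b - a) := by
    intro a b hTa hab hηu
    have h := le_sub_mul_of_eq_integral hu hν.le (hf b ((hT a hTa).2.trans hab)) (hT a hTa).2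
      hab (fun r hr => (hT r (hTa.trans hr.1)).1) hηu heq
    rwa [show ν * η - κ = κ by rw [hκ_def]; ring] at h
  filter_upwards [eventually_ge_atTop T, eventually_ge_atTop (T + u T / κ)] with t hTt ht
  have hdecayed : u T ≤ κ * (t - T) := by
    rw [← le_sub_iff_add_le', div_le_iff₀' hκ] at ht
    exact ht
  exact (le_max_of_decrease_above hu hκ.le hdec hTt).trans (max_le le_rfl (by linarith))

theorem delta1_tendsto_zero_general (lam nu : ℝ) (hnu : 0 < nu)
    (δ1 p0 : ℝ → ℝ)
    (hδ1cont : Continuous δ1) (hδ1nonneg : ∀ t, 0 ≤ t → 0 ≤ δ1 t)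
    (hp0meas : Measurable p0) (hp0mem : ∀ t, 0 ≤ t → p0 t ∈ Set.Icc (0:ℝ) 1)
    (hp0lim : Tendsto p0 atTop (nhds 1))
    (heq : ∀ t, 0 ≤ t →
      δ1 t = δ1 0 + (∫ s in (0:ℝ)..t, lam * (1 - p0 s)) - nu * ∫ s in (0:ℝ)..t, δ1 s) :
    Tendsto δ1 atTop (nhds 0) := by
  have hinput_int : ∀ t, 0 ≤ t → IntervalIntegrable (fun s => lam * (1 - p0 s)) volume 0 t := by
    intro t ht
    refine (intervalIntegrable_const (c := |lam|)).mono_fun' (by fun_prop) ?_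
    refine (ae_restrict_iff' measurableSet_uIoc).2 (Eventually.of_forall fun s hs => ?_)
    rw [uIoc_of_le ht] at hs
    obtain ⟨h0, h1⟩ := hp0mem s hs.1.le
    change ‖lam * (1 - p0 s)‖ ≤ |lam|
    rw [norm_mul, Real.norm_eq_abs, Real.norm_eq_abs, abs_of_nonneg (sub_nonneg.2 h1)]
    exact mul_le_of_le_one_right (abs_nonneg lam) (by linarith)
  have hinput_lim : Tendsto (fun s => lam * (1 - p0 s)) atTop (nhds 0) := by
    simpa using ((tendsto_const_nhds (x := (1 : ℝ))).sub hp0lim).const_mul lam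
  refine tendsto_order.2 ⟨fun a ha => ?_, fun η hη => ?_⟩
  · filter_upwards [eventually_ge_atTop 0] with t ht using ha.trans_le (hδ1nonneg t ht)
  · filter_upwards [eventually_le_of_eq_integral hδ1cont hnu hinput_int
      (fun ε hε => hinput_lim.eventually (eventually_le_nhds hε)) heq (half_pos hη)]
      with t ht using ht.trans_lt (half_lt_self hη)

/-- If `δ₁ : [0,∞) → [0,∞)` satisfies
`δ₁(t) = δ₁(0) + ∫₀ᵗ λ(1 - p₀(s)) ds - ν ∫₀ᵗ δ₁(s) ds`
with `p₀ : [0,∞) → [0,1]` measurable and `p₀(t) → 1` as `t → ∞`,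
then `δ₁(t) → 0` as `t → ∞`. -/
theorem delta1_tendsto_zero (lam nu : ℝ) (hlam : 0 < lam) (hnu : 0 < nu)
    (δ1 p0 : ℝ → ℝ)
    (hδ1cont : Continuous δ1) (hδ1nonneg : ∀ t, 0 ≤ t → 0 ≤ δ1 t)
    (hδ1bdd : ∃ C, ∀ t, 0 ≤ t → δ1 t ≤ C)
    (hp0meas : Measurable p0) (hp0mem : ∀ t, 0 ≤ t → p0 t ∈ Set.Icc (0:ℝ) 1)
    (hp0lim : Tendsto p0 atTop (nhds 1))
    (heq : ∀ t, 0 ≤ t →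
      δ1 t = δ1 0 + (∫ s in (0:ℝ)..t, lam * (1 - p0 s)) - nu * ∫ s in (0:ℝ)..t, δ1 s) :
    Tendsto δ1 atTop (nhds 0) :=
  delta1_tendsto_zero_general lam nu hnu δ1 p0 hδ1cont hδ1nonneg hp0meas hp0mem hp0lim heq
end

section
/- If q₁(0) > 0 and λ(t) ≥ λ_min > 0 for all t, then along the fluid-limit solution q₁(t) > 0 for all t ≥ 0; indeed the drift of q₁ is nonnegative whenever q₁(t) < λ_min, because λ(t)p₀ − (q₁ − q₂) ≥ min{λ(t) − (q₁ − q₂), δ₁ν} ≥ min{λ_min − q₁, δ₁ν} ≥ 0. -/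
/-!
While `q₁ < λ_min`, the drift `λ p₀ - (q₁ - q₂)` is nonnegative, because
`λ p₀ ≥ min {δ₁ν + q₁ - q₂, λ}` and both terms dominate `q₁ - q₂`. So if `q₁` ever
reached `0`, then just before its first zero `T` it would lie in `(0, λ_min)` and could
not decrease up to `T`.
-/

open Filter Set Topology

/-- The coefficient `p₀(q, δ, λ)` of the fluid-limit dynamics, expressed in terms of
`q₁, q₂, δ₀, δ₁`: equal to `1` if `u = 1 - q₁ - δ₀ - δ₁ > 0`, and to
`min{λ⁻¹(δ₁ν + q₁ - q₂), 1}` otherwise. -/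
noncomputable def fluidP0' (lam nu q1 q2 d0 d1 : ℝ) : ℝ :=
  if 1 - q1 - d0 - d1 > 0 then 1 else min (lam⁻¹ * (d1 * nu + q1 - q2)) 1

lemma min_le_mul_fluidP0' {lam : ℝ} (hlam : 0 < lam) (nu q1 q2 d0 d1 : ℝ) :
    min (d1 * nu + q1 - q2) lam ≤ lam * fluidP0' lam nu q1 q2 d0 d1 := by
  unfold fluidP0'
  split_ifs
  · simp
  · rw [mul_min_of_nonneg _ _ hlam.le, ← mul_assoc, mul_inv_cancel₀ hlam.ne', one_mul,
      mul_one]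

lemma fluidP0'_drift_nonneg {lam nu q1 q2 d1 : ℝ} (hlam : 0 < lam) (hnu : 0 ≤ nu)
    (hq1 : q1 ≤ lam) (hq2 : 0 ≤ q2) (hd1 : 0 ≤ d1) (d0 : ℝ) :
    0 ≤ lam * fluidP0' lam nu q1 q2 d0 d1 - (q1 - q2) := by
  have hmin : q1 - q2 ≤ min (d1 * nu + q1 - q2) lam :=
    le_min (by nlinarith) (by linarith)
  linarith [min_le_mul_fluidP0' hlam nu q1 q2 d0 d1]

/-- If `f` is not integrable on `[0, t]`, the integral equation degenerates to `q t = q 0`. -/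
lemma min_le_of_eq_add_integral {q f : ℝ → ℝ}
    (hq : ∀ t, 0 ≤ t → q t = q 0 + ∫ u in (0 : ℝ)..t, f u) {s t : ℝ} (hs : 0 ≤ s)
    (hst : s ≤ t) (hf : ∀ u ∈ Icc s t, 0 ≤ f u) :
    min (q 0) (q s) ≤ q t := by
  by_cases hint : IntervalIntegrable f MeasureTheory.volume 0 t
  · have h0s : IntervalIntegrable f MeasureTheory.volume 0 s :=
      hint.mono_set (by rw [uIcc_of_le hs, uIcc_of_le (hs.trans hst)]; gcongr)
    have hst' : IntervalIntegrable f MeasureTheory.volume s t :=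
      hint.mono_set (by rw [uIcc_of_le hst, uIcc_of_le (hs.trans hst)]; gcongr)
    have hsplit := intervalIntegral.integral_add_adjacent_intervals h0s hst'
    have hpos : 0 ≤ ∫ u in s..t, f u := intervalIntegral.integral_nonneg hst hf
    have := hq s hs
    have := hq t (hs.trans hst)
    exact (min_le_right _ _).trans (by linarith)
  · rw [hq t (hs.trans hst), intervalIntegral.integral_undef hint, add_zero]
    exact min_le_left _ _

lemma Continuous.exists_first_nonpos {q : ℝ → ℝ} (hcont : Continuous q) {t₀ : ℝ}
    (ht₀ : 0 ≤ t₀) (hqt₀ : q t₀ ≤ 0) :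
    ∃ T, 0 ≤ T ∧ q T ≤ 0 ∧ ∀ s ∈ Ico 0 T, 0 < q s := by
  set S : Set ℝ := Ici 0 ∩ q ⁻¹' Iic 0
  have hS : IsClosed S := isClosed_Ici.inter (isClosed_Iic.preimage hcont)
  have hbdd : BddBelow S := ⟨0, fun _ hx => hx.1⟩
  obtain ⟨hT0, hqT⟩ := hS.csInf_mem ⟨t₀, ht₀, hqt₀⟩ hbdd
  refine ⟨sInf S, hT0, hqT, fun s ⟨hs0, hsT⟩ => ?_⟩
  by_contra hqs
  exact notMem_of_lt_csInf hsT hbdd ⟨hs0, not_lt.mp hqs⟩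

theorem pos_of_eq_add_integral_of_drift_nonneg {q f : ℝ → ℝ} {c : ℝ} (hc : 0 < c)
    (hcont : Continuous q) (hq : ∀ t, 0 ≤ t → q t = q 0 + ∫ u in (0 : ℝ)..t, f u)
    (hf : ∀ t, 0 ≤ t → q t < c → 0 ≤ f t) (hq0 : 0 < q 0) :
    ∀ t, 0 ≤ t → 0 < q t := by
  intro t₀ ht₀
  by_contra! hqt₀
  obtain ⟨T, hT0, hqT, hpos⟩ := hcont.exists_first_nonpos ht₀ hqt₀
  have hT : 0 < T := hT0.lt_of_ne fun h => by rw [← h] at hqT; linarith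
  have hbelow : {u | q u < c} ∈ 𝓝[≤] T :=
    nhdsWithin_le_nhds (hcont.continuousAt.eventually_lt_const (hqT.trans_lt hc))
  obtain ⟨l, hlT, hl⟩ := mem_nhdsLE_iff_exists_Icc_subset.mp hbelow
  set s := max l 0
  have hsT : s < T := max_lt hlT hT
  have hdrift : ∀ u ∈ Icc s T, 0 ≤ f u := fun u hu =>
    hf u ((le_max_right _ _).trans hu.1) (hl ⟨(le_max_left _ _).trans hu.1, hu.2⟩)
  have hmono := min_le_of_eq_add_integral hq (le_max_right _ _) hsT.le hdrift
  have hqs : 0 < q s := hpos s ⟨le_max_right _ _, hsT⟩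
  linarith [lt_min hq0 hqs]

theorem q1_stays_positive_general (nu lammin : ℝ) (hnu : 0 < nu) (hlammin : 0 < lammin)
    (lam : ℝ → ℝ) (hlamlb : ∀ t, 0 ≤ t → lammin ≤ lam t)
    (q1 q2 d0 d1 : ℝ → ℝ)
    (hq1cont : Continuous q1)
    -- the trajectory stays in E
    (hq2nonneg : ∀ t, 0 ≤ t → 0 ≤ q2 t)
    (hd1mem : ∀ t, 0 ≤ t → d1 t ∈ Set.Icc (0:ℝ) 1)
    -- fluid-limit integral equation for q₁
    (hq1eq : ∀ t, 0 ≤ t →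
      q1 t = q1 0 + ∫ s in (0:ℝ)..t,
        (lam s * fluidP0' (lam s) nu (q1 s) (q2 s) (d0 s) (d1 s) - (q1 s - q2 s)))
    (hq10 : 0 < q1 0) :
    (∀ t, 0 ≤ t → q1 t < lammin →
      0 ≤ lam t * fluidP0' (lam t) nu (q1 t) (q2 t) (d0 t) (d1 t) - (q1 t - q2 t)) ∧
    ∀ t, 0 ≤ t → 0 < q1 t := by
  have hdrift : ∀ t, 0 ≤ t → q1 t < lammin →
      0 ≤ lam t * fluidP0' (lam t) nu (q1 t) (q2 t) (d0 t) (d1 t) - (q1 t - q2 t) :=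
    fun t ht hq1t => fluidP0'_drift_nonneg (hlammin.trans_le (hlamlb t ht)) hnu.le
      (hq1t.le.trans (hlamlb t ht)) (hq2nonneg t ht) (hd1mem t ht).1 (d0 t)
  exact ⟨hdrift, pos_of_eq_add_integral_of_drift_nonneg hlammin hq1cont hq1eq hdrift hq10⟩

/-- If `q₁(0) > 0` and `λ(t) ≥ λ_min > 0`, then along the fluid-limit solution the
drift of `q₁` is nonnegative whenever `q₁(t) < λ_min` (since
`λ(t)p₀ - (q₁ - q₂) ≥ min{λ(t) - (q₁ - q₂), δ₁ν} ≥ min{λ_min - q₁, δ₁ν} ≥ 0`),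
and consequently `q₁(t) > 0` for all `t ≥ 0`. -/
theorem q1_stays_positive (nu lammin : ℝ) (hnu : 0 < nu) (hlammin : 0 < lammin)
    (lam : ℝ → ℝ) (hlamlb : ∀ t, 0 ≤ t → lammin ≤ lam t)
    (hlamub : ∃ C, ∀ t, 0 ≤ t → lam t ≤ C)
    (q1 q2 d0 d1 : ℝ → ℝ)
    (hq1cont : Continuous q1) (hq2cont : Continuous q2)
    (hd0cont : Continuous d0) (hd1cont : Continuous d1)
    -- the trajectory stays in E
    (hq2nonneg : ∀ t, 0 ≤ t → 0 ≤ q2 t) (hq21 : ∀ t, 0 ≤ t → q2 t ≤ q1 t)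
    (hq1le : ∀ t, 0 ≤ t → q1 t ≤ 1)
    (hd0mem : ∀ t, 0 ≤ t → d0 t ∈ Set.Icc (0:ℝ) 1)
    (hd1mem : ∀ t, 0 ≤ t → d1 t ∈ Set.Icc (0:ℝ) 1)
    (hEsum : ∀ t, 0 ≤ t → q1 t + d0 t + d1 t ≤ 1)
    -- fluid-limit integral equation for q₁
    (hq1eq : ∀ t, 0 ≤ t →
      q1 t = q1 0 + ∫ s in (0:ℝ)..t,
        (lam s * fluidP0' (lam s) nu (q1 s) (q2 s) (d0 s) (d1 s) - (q1 s - q2 s)))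
    (hq10 : 0 < q1 0) :
    (∀ t, 0 ≤ t → q1 t < lammin →
      0 ≤ lam t * fluidP0' (lam t) nu (q1 t) (q2 t) (d0 t) (d1 t) - (q1 t - q2 t)) ∧
    ∀ t, 0 ≤ t → 0 < q1 t :=
  q1_stays_positive_general nu lammin hnu hlammin lam hlamlb q1 q2 d0 d1 hq1cont hq2nonneg hd1mem
    hq1eq hq10
end

section
/- Lower bound on the cumulative setup initiation: for all sufficiently small ε > 0 (specifically ε < 2(1−λ)/max(1−ν, 0⁺)), the fluid-limit quantity ξ(t) = ∫₀ᵗ λ(1 − p₀(q(s), δ(s), λ))·1{δ₀(s) > 0} ds satisfies ξ(t) ≥ ∫₀ᵗ (λ − εν/2 − q₁(s)) ds − ∫₀ᵗ 1{u(s) > 0} ds − ∫₀ᵗ 1{δ₁(s) > ε/2} ds. -/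
/-!
Integrate a pointwise inequality. Where `u > 0` or `δ₁ > ε/2`, an indicator `1` dominates
`λ - εν/2 - q₁`. On `{δ₀ > 0, u = 0, δ₁ ≤ ε/2}`, `λ(1 - p₀) ≥ λ - (δ₁ν + q₁ - q₂) ≥ λ - εν/2 - q₁`.
On `{δ₀ = 0, u = 0, δ₁ ≤ ε/2}`, `q₁ ≥ 1 - ε/2`, so `λ - εν/2 - q₁ ≤ λ - 1 + ε(1 - ν)/2 ≤ 0`
by the smallness of `ε`.
-/

open MeasureTheory

/-- The integrand `λ(1 - p₀)·1{δ₀ > 0}` of `ξ`. -/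
noncomputable def setupInitiationRate (lam nu q1 q2 d0 d1 : ℝ) : ℝ :=
  if d0 > 0 then lam * (1 - fluidP0' lam nu q1 q2 d0 d1) else 0

section Pointwise

variable {lam nu q1 q2 d0 d1 : ℝ}

theorem fluidP0'_le_one : fluidP0' lam nu q1 q2 d0 d1 ≤ 1 := by
  unfold fluidP0'
  split
  · exact le_rfl
  · exact min_le_right _ _

theorem fluidP0'_nonneg (hlam : 0 ≤ lam) (hnu : 0 ≤ nu) (hd1 : 0 ≤ d1) (hq21 : q2 ≤ q1) :
    0 ≤ fluidP0' lam nu q1 q2 d0 d1 := by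
  unfold fluidP0'
  split
  · exact zero_le_one
  · exact le_min (mul_nonneg (inv_nonneg.mpr hlam) (by nlinarith)) zero_le_one

theorem sub_le_mul_one_sub_fluidP0' (hlam : 0 < lam) (hu : ¬ 1 - q1 - d0 - d1 > 0) :
    lam - (d1 * nu + q1 - q2) ≤ lam * (1 - fluidP0' lam nu q1 q2 d0 d1) := by
  have hmin : lam * min (lam⁻¹ * (d1 * nu + q1 - q2)) 1 ≤ d1 * nu + q1 - q2 :=
    calc lam * min (lam⁻¹ * (d1 * nu + q1 - q2)) 1
        ≤ lam * (lam⁻¹ * (d1 * nu + q1 - q2)) := by gcongr; exact min_le_left _ _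
      _ = d1 * nu + q1 - q2 := by field_simp
  rw [fluidP0', if_neg hu]
  linarith

theorem setupInitiationRate_nonneg (hlam : 0 ≤ lam) :
    0 ≤ setupInitiationRate lam nu q1 q2 d0 d1 := by
  unfold setupInitiationRate
  split
  · exact mul_nonneg hlam (sub_nonneg.mpr fluidP0'_le_one)
  · exact le_rfl

theorem setupInitiationRate_le (hlam : 0 ≤ lam) (hnu : 0 ≤ nu) (hd1 : 0 ≤ d1)
    (hq21 : q2 ≤ q1) : setupInitiationRate lam nu q1 q2 d0 d1 ≤ lam := by
  have hp0 := fluidP0'_nonneg (d0 := d0) hlam hnu hd1 hq21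
  unfold setupInitiationRate
  split
  · nlinarith
  · exact hlam

theorem sub_indicators_le_setupInitiationRate {ε : ℝ} (hlam : 0 < lam) (hnu : 0 ≤ nu)
    (hε : 0 ≤ ε) (hεsmall : ε * (1 - nu) ≤ 2 * (1 - lam))
    (hq2 : 0 ≤ q2) (hq21 : q2 ≤ q1) (hd0 : 0 ≤ d0) :
    lam - ε * nu / 2 - q1 - (if 1 - q1 - d0 - d1 > 0 then (1:ℝ) else 0) -
        (if d1 > ε / 2 then (1:ℝ) else 0) ≤ setupInitiationRate lam nu q1 q2 d0 d1 := by
  have hεν : 0 ≤ ε * nu := mul_nonneg hε hnu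
  have hrate : 0 ≤ setupInitiationRate lam nu q1 q2 d0 d1 := setupInitiationRate_nonneg hlam.le
  have hind : 0 ≤ if d1 > ε / 2 then (1:ℝ) else 0 := by split <;> norm_num
  by_cases hu : 1 - q1 - d0 - d1 > 0
  · rw [if_pos hu]
    linarith
  rw [if_neg hu]
  by_cases hd1 : d1 > ε / 2
  · rw [if_pos hd1]
    linarith
  rw [if_neg hd1]
  unfold setupInitiationRate
  by_cases hd0pos : d0 > 0
  · have hd1nu : d1 * nu ≤ ε / 2 * nu := mul_le_mul_of_nonneg_right (not_lt.mp hd1) hnu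
    have := sub_le_mul_one_sub_fluidP0' (nu := nu) (q2 := q2) hlam hu
    rw [if_pos hd0pos]
    linarith
  · have hd00 : d0 = 0 := le_antisymm (not_lt.mp hd0pos) hd0
    rw [if_neg hd0pos]
    linarith [not_lt.mp hu, not_lt.mp hd1]

end Pointwise

section Measurability

variable {lam nu : ℝ} {q1 q2 d0 d1 : ℝ → ℝ}

theorem measurable_fluidP0' (hq1 : Continuous q1) (hq2 : Continuous q2) (hd0 : Continuous d0)
    (hd1 : Continuous d1) : Measurable fun s => fluidP0' lam nu (q1 s) (q2 s) (d0 s) (d1 s) :=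
  Measurable.ite (measurableSet_lt measurable_const (by fun_prop)) measurable_const
    (by fun_prop : Continuous _).measurable

theorem measurable_setupInitiationRate (hq1 : Continuous q1) (hq2 : Continuous q2)
    (hd0 : Continuous d0) (hd1 : Continuous d1) :
    Measurable fun s => setupInitiationRate lam nu (q1 s) (q2 s) (d0 s) (d1 s) :=
  Measurable.ite (measurableSet_lt measurable_const hd0.measurable)
    ((measurable_fluidP0' hq1 hq2 hd0 hd1).const_sub 1 |>.const_mul lam) measurable_const

end Measurability

theorem intervalIntegrable_of_abs_le {F : ℝ → ℝ} {a b C : ℝ} (hF : Measurable F)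
    (hC : ∀ s ∈ Set.uIoc a b, |F s| ≤ C) : IntervalIntegrable F volume a b :=
  intervalIntegrable_const.mono_fun' hF.aestronglyMeasurable
    ((ae_restrict_mem measurableSet_uIoc).mono hC)

theorem intervalIntegrable_ite_one_zero {p : ℝ → Prop} [DecidablePred p]
    (hp : MeasurableSet {s | p s}) (a b : ℝ) :
    IntervalIntegrable (fun s => if p s then (1:ℝ) else 0) volume a b :=
  intervalIntegrable_of_abs_le (Measurable.ite hp measurable_const measurable_const)
    (C := 1) fun s _ => by split <;> simp

theorem xi_lower_bound_general (lam nu ε : ℝ) (hlam0 : 0 < lam)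
    (hnu : 0 < nu) (hε : 0 < ε) (hεsmall : ε * (1 - nu) < 2 * (1 - lam))
    (q1 q2 d0 d1 : ℝ → ℝ)
    (hq1cont : Continuous q1) (hq2cont : Continuous q2)
    (hd0cont : Continuous d0) (hd1cont : Continuous d1)
    -- the trajectory stays in E
    (hq2nonneg : ∀ s, 0 ≤ s → 0 ≤ q2 s) (hq21 : ∀ s, 0 ≤ s → q2 s ≤ q1 s)
    (hd0mem : ∀ s, 0 ≤ s → d0 s ∈ Set.Icc (0:ℝ) 1)
    (hd1mem : ∀ s, 0 ≤ s → d1 s ∈ Set.Icc (0:ℝ) 1) :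
    ∀ t, 0 ≤ t →
      (∫ s in (0:ℝ)..t, (lam - ε * nu / 2 - q1 s)) -
          (∫ s in (0:ℝ)..t, (if 1 - q1 s - d0 s - d1 s > 0 then (1:ℝ) else 0)) -
          (∫ s in (0:ℝ)..t, (if d1 s > ε / 2 then (1:ℝ) else 0)) ≤
        ∫ s in (0:ℝ)..t,
          (if d0 s > 0 then
            lam * (1 - fluidP0' lam nu (q1 s) (q2 s) (d0 s) (d1 s)) else 0) := by
  intro t ht
  have hq1_int : IntervalIntegrable (fun s => lam - ε * nu / 2 - q1 s) volume 0 t :=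
    (continuous_const.sub hq1cont).intervalIntegrable _ _
  have hu_int := intervalIntegrable_ite_one_zero (p := fun s => 1 - q1 s - d0 s - d1 s > 0)
    (measurableSet_lt measurable_const (by fun_prop)) 0 t
  have hd1_int := intervalIntegrable_ite_one_zero (p := fun s => d1 s > ε / 2)
    (measurableSet_lt measurable_const hd1cont.measurable) 0 t
  have hrate_int : IntervalIntegrable
      (fun s => setupInitiationRate lam nu (q1 s) (q2 s) (d0 s) (d1 s)) volume 0 t := by
    refine intervalIntegrable_of_abs_le (C := lam)
      (measurable_setupInitiationRate hq1cont hq2cont hd0cont hd1cont) fun s hs => ?_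
    have hs0 : 0 ≤ s := (Set.uIoc_of_le ht ▸ hs).1.le
    rw [abs_of_nonneg (setupInitiationRate_nonneg hlam0.le)]
    exact setupInitiationRate_le hlam0.le hnu.le (hd1mem s hs0).1 (hq21 s hs0)
  rw [← intervalIntegral.integral_sub hq1_int hu_int,
    ← intervalIntegral.integral_sub (hq1_int.sub hu_int) hd1_int]
  exact intervalIntegral.integral_mono_on ht ((hq1_int.sub hu_int).sub hd1_int) hrate_int
    fun s hs => sub_indicators_le_setupInitiationRate hlam0 hnu.le hε.le hεsmall.le
      (hq2nonneg s hs.1) (hq21 s hs.1) (hd0mem s hs.1).1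

/-- Lower bound on the cumulative setup initiation (Fact 4 in the global-stability
proof): for all sufficiently small `ε > 0` (precisely, `ε(1 - ν) < 2(1 - λ)`), the
quantity `ξ(t) = ∫₀ᵗ λ(1 - p₀(s))·1{δ₀(s) > 0} ds` satisfies
`ξ(t) ≥ ∫₀ᵗ (λ - εν/2 - q₁(s)) ds - ∫₀ᵗ 1{u(s) > 0} ds - ∫₀ᵗ 1{δ₁(s) > ε/2} ds`. -/
theorem xi_lower_bound (lam nu ε : ℝ) (hlam0 : 0 < lam) (hlam1 : lam < 1)
    (hnu : 0 < nu) (hε : 0 < ε) (hεsmall : ε * (1 - nu) < 2 * (1 - lam))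
    (q1 q2 d0 d1 : ℝ → ℝ)
    (hq1cont : Continuous q1) (hq2cont : Continuous q2)
    (hd0cont : Continuous d0) (hd1cont : Continuous d1)
    -- the trajectory stays in E
    (hq2nonneg : ∀ s, 0 ≤ s → 0 ≤ q2 s) (hq21 : ∀ s, 0 ≤ s → q2 s ≤ q1 s)
    (hq1le : ∀ s, 0 ≤ s → q1 s ≤ 1)
    (hd0mem : ∀ s, 0 ≤ s → d0 s ∈ Set.Icc (0:ℝ) 1)
    (hd1mem : ∀ s, 0 ≤ s → d1 s ∈ Set.Icc (0:ℝ) 1)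
    (hEsum : ∀ s, 0 ≤ s → q1 s + d0 s + d1 s ≤ 1) :
    ∀ t, 0 ≤ t →
      (∫ s in (0:ℝ)..t, (lam - ε * nu / 2 - q1 s)) -
          (∫ s in (0:ℝ)..t, (if 1 - q1 s - d0 s - d1 s > 0 then (1:ℝ) else 0)) -
          (∫ s in (0:ℝ)..t, (if d1 s > ε / 2 then (1:ℝ) else 0)) ≤
        ∫ s in (0:ℝ)..t,
          (if d0 s > 0 then
            lam * (1 - fluidP0' lam nu (q1 s) (q2 s) (d0 s) (d1 s)) else 0) :=
  xi_lower_bound_general lam nu ε hlam0 hnu hε hεsmall q1 q2 d0 d1 hq1cont hq2cont hd0cont hd1cont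
    hq2nonneg hq21 hd0mem hd1mem
end
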